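/- Suppose an information structure u on K × C × D exhibits ε-knowledge of the state via a map κ : C ∪ D → K (the probability that a player assigns at least 1-ε to state κ(signal) is at least 1-ε for each player), and let v be the common-knowledge structure with the same marginal on K (both players told the state). Then the value-based distance satisfies d(u,v) ≤ 20ε. -/

import Mathlib

open scoped BigOperators

noncomputable section

/-- A probability distribution on a finite type, given as a nonnegative function summing to 1. -/
def IsDist {α : Type*} [Fintype α] (u : α → ℝ) : Prop :=
  (∀ a, 0 ≤ u a) ∧ ∑ a, u a = 1

/-- A garbling (stochastic map / behavioral strategy). -/
def IsKernel {α β : Type*} [Fintype β] (q : α → β → ℝ) : Prop :=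
  ∀ a, IsDist (q a)

/-- Expected payoff in the zero-sum Bayesian game `Γ(u,g)` when players use
behavioral strategies `σ` and `τ`. -/
def pay {K C D I J : Type*} [Fintype K] [Fintype C] [Fintype D] [Fintype I] [Fintype J]
    (u : K × C × D → ℝ) (g : K → I → J → ℝ) (σ : C → I → ℝ) (τ : D → J → ℝ) : ℝ :=
  ∑ k, ∑ c, ∑ d, ∑ i, ∑ j, u (k, c, d) * σ c i * τ d j * g k i j

/-- The value (maxmin) of the zero-sum Bayesian game `Γ(u,g)`, player 1 maximizing. -/
def gameVal {K C D I J : Type*} [Fintype K] [Fintype C] [Fintype D] [Fintype I] [Fintype J]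
    (u : K × C × D → ℝ) (g : K → I → J → ℝ) : ℝ :=
  sSup {x : ℝ | ∃ σ : C → I → ℝ, IsKernel σ ∧
    x = sInf {y : ℝ | ∃ τ : D → J → ℝ, IsKernel τ ∧ y = pay u g σ τ}}

/-- Garbling of player 1's signal: `(q.u)(k,c,d) = ∑ c', u(k,c',d) q(c|c')`. -/
def garbleL {K C C' D : Type*} [Fintype C] (q : C → C' → ℝ) (u : K × C × D → ℝ) :
    K × C' × D → ℝ :=
  fun x => ∑ c, u (x.1, c, x.2.2) * q c x.2.1

/-- Garbling of player 2's signal: `(u.q)(k,c,d) = ∑ d', u(k,c,d') q(d|d')`. -/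
def garbleR {K C D D' : Type*} [Fintype D] (q : D → D' → ℝ) (u : K × C × D → ℝ) :
    K × C × D' → ℝ :=
  fun x => ∑ d, u (x.1, x.2.1, d) * q d x.2.2

/-- ℓ¹ distance. -/
def l1 {α : Type*} [Fintype α] (u v : α → ℝ) : ℝ := ∑ a, |u a - v a|

/-- Payoff functions bounded by 1. -/
def Bounded1 {K I J : Type*} (g : K → I → J → ℝ) : Prop := ∀ k i j, |g k i j| ≤ 1

/-- The value-based distance: sup over all finite zero-sum games (with nonempty
finite action sets, payoffs bounded by 1) of the absolute difference of values. -/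
def valueDist {K C D C' D' : Type*} [Fintype K] [Fintype C] [Fintype D] [Fintype C'] [Fintype D']
    (u : K × C × D → ℝ) (v : K × C' × D' → ℝ) : ℝ :=
  sSup {x : ℝ | ∃ (m n : ℕ) (g : K → Fin (m + 1) → Fin (n + 1) → ℝ),
    Bounded1 g ∧ x = |gameVal u g - gameVal v g|}

/-- Value of a single-agent decision problem on a single-agent information structure. -/
def val1 {K C I : Type*} [Fintype K] [Fintype C] [Fintype I] [Nonempty I]
    (u : K × C → ℝ) (g : K → I → ℝ) : ℝ :=
  ∑ c, ⨆ i, ∑ k, u (k, c) * g k i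

/-- The single-agent value-based distance. -/
def valueDist1 {K C C' : Type*} [Fintype K] [Fintype C] [Fintype C']
    (u : K × C → ℝ) (v : K × C' → ℝ) : ℝ :=
  sSup {x : ℝ | ∃ (m : ℕ) (g : K → Fin (m + 1) → ℝ),
    (∀ k i, |g k i| ≤ 1) ∧ x = |val1 u g - val1 v g|}

/-- Garbling of the signal in a single-agent structure. -/
def garble1 {K C C' : Type*} [Fintype C] (q : C → C' → ℝ) (u : K × C → ℝ) : K × C' → ℝ :=
  fun x => ∑ c, u (x.1, c) * q c x.2

end

/-! Under ε-knowledge the signal of each player reveals the state through `κ` except on an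
event of probability at most `2ε`. Guarantees therefore transfer between `u` and the
common-knowledge structure `v`: a strategy `k ↦ σ k` in `v` is imitated in `u` by
`c ↦ σ (κ c)`, and a strategy in `u` is matched in `v` by its average conditional on the state.
Payoffs differ only where `κ` misreads the state, hence by at most `2 · 2ε`, so the values
differ by at most `4ε ≤ 20ε`. -/

open Finset

noncomputable section

def mixedPay {I J : Type*} [Fintype I] [Fintype J] (g : I → J → ℝ) (p : I → ℝ) (q : J → ℝ) :
    ℝ :=
  ∑ i, ∑ j, p i * q j * g i j

def average {X J : Type*} [Fintype X] [Fintype J] (w : X → ℝ) (τ : X → J → ℝ) : J → ℝ :=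
  if 0 < ∑ x, w x then fun j => (∑ x, w x * τ x j) / ∑ x, w x
  else fun _ => 1 / Fintype.card J

section Average

variable {X J : Type*} [Fintype X] [Fintype J] {w : X → ℝ} {τ : X → J → ℝ}

lemma isDist_uniform [Nonempty J] : IsDist (fun _ : J => (1 : ℝ) / Fintype.card J) := by
  refine ⟨fun _ => by positivity, ?_⟩
  simp [Finset.card_univ]

lemma isDist_average [Nonempty J] (hw : ∀ x, 0 ≤ w x) (hτ : IsKernel τ) :
    IsDist (average w τ) := by
  unfold average
  split_ifs with h
  · refine ⟨fun j => div_nonneg (sum_nonneg fun x _ => mul_nonneg (hw x) ((hτ x).1 j))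
      h.le, ?_⟩
    rw [← sum_div, sum_comm]
    simp only [← mul_sum, (hτ _).2, mul_one]
    exact div_self h.ne'
  · exact isDist_uniform

lemma sum_mul_average (hw : ∀ x, 0 ≤ w x) (j : J) :
    (∑ x, w x) * average w τ j = ∑ x, w x * τ x j := by
  unfold average
  split_ifs with h
  · exact mul_div_cancel₀ _ h.ne'
  · have hw0 : ∀ x, w x = 0 := fun x =>
      (sum_eq_zero_iff_of_nonneg fun x _ => hw x).mp
        (le_antisymm (not_lt.mp h) (sum_nonneg fun x _ => hw x)) x (mem_univ x)
    simp [hw0]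

end Average

section MixedPay

variable {I J : Type*} [Fintype I] [Fintype J] {g : I → J → ℝ}

lemma mixedPay_comm (p : I → ℝ) (q : J → ℝ) :
    mixedPay g p q = mixedPay (fun j i => g i j) q p := by
  unfold mixedPay
  rw [sum_comm]
  simp only [mul_comm (p _)]

lemma abs_mixedPay_le (hg : ∀ i j, |g i j| ≤ 1) {p : I → ℝ} {q : J → ℝ} (hp : IsDist p)
    (hq : IsDist q) : |mixedPay g p q| ≤ 1 := by
  calc |mixedPay g p q| ≤ ∑ i, ∑ j, |p i * q j * g i j| :=
        (abs_sum_le_sum_abs _ _).trans (sum_le_sum fun i _ => abs_sum_le_sum_abs _ _)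
    _ ≤ ∑ i, ∑ j, p i * q j := by
        gcongr with i _ j _
        rw [abs_mul, abs_of_nonneg (mul_nonneg (hp.1 i) (hq.1 j))]
        exact mul_le_of_le_one_right (mul_nonneg (hp.1 i) (hq.1 j)) (hg i j)
    _ = 1 := by rw [← sum_mul_sum, hp.2, hq.2, one_mul]

variable {X : Type*} [Fintype X] {w : X → ℝ}

lemma sum_mul_mixedPay_average_right (hw : ∀ x, 0 ≤ w x) (p : I → ℝ) (τ : X → J → ℝ) :
    (∑ x, w x) * mixedPay g p (average w τ) = ∑ x, w x * mixedPay g p (τ x) := by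
  calc (∑ x, w x) * mixedPay g p (average w τ)
      = ∑ i, ∑ j, p i * ((∑ x, w x) * average w τ j) * g i j := by
        simp only [mixedPay, mul_sum]
        exact sum_congr rfl fun i _ => sum_congr rfl fun j _ => by ring
    _ = ∑ i, ∑ j, ∑ x, w x * (p i * τ x j * g i j) := by
        simp only [sum_mul_average hw, mul_sum, sum_mul]
        exact sum_congr rfl fun i _ => sum_congr rfl fun j _ =>
          sum_congr rfl fun x _ => by ring
    _ = ∑ x, w x * mixedPay g p (τ x) := by
        simp only [mixedPay, mul_sum]
        exact (sum_congr rfl fun i _ => sum_comm).trans sum_comm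

lemma sum_mul_mixedPay_average_left (hw : ∀ x, 0 ≤ w x) (σ : X → I → ℝ) (q : J → ℝ) :
    (∑ x, w x) * mixedPay g (average w σ) q = ∑ x, w x * mixedPay g (σ x) q := by
  simp only [mixedPay_comm (g := g)]
  exact sum_mul_mixedPay_average_right hw q σ

end MixedPay

section Game

variable {K C D I J : Type*} [Fintype K] [Fintype C] [Fintype D] [Fintype I] [Fintype J]
  {u : K × C × D → ℝ} {g : K → I → J → ℝ}

lemma IsDist.sum_sum_sum (hu : IsDist u) : ∑ k, ∑ c, ∑ d, u (k, c, d) = 1 := by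
  simpa only [Fintype.sum_prod_type] using hu.2

lemma pay_eq_sum_mixedPay (u : K × C × D → ℝ) (σ : C → I → ℝ) (τ : D → J → ℝ) :
    pay u g σ τ = ∑ x, u x * mixedPay (g x.1) (σ x.2.1) (τ x.2.2) := by
  simp only [pay, mixedPay, Fintype.sum_prod_type, mul_sum, mul_assoc]

lemma abs_pay_le (hu : IsDist u) (hg : Bounded1 g) {σ : C → I → ℝ} (hσ : IsKernel σ)
    {τ : D → J → ℝ} (hτ : IsKernel τ) : |pay u g σ τ| ≤ 1 := by
  rw [pay_eq_sum_mixedPay, ← hu.2]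
  refine (abs_sum_le_sum_abs _ _).trans (sum_le_sum fun x _ => ?_)
  rw [abs_mul, abs_of_nonneg (hu.1 x)]
  exact mul_le_of_le_one_right (hu.1 x) (abs_mixedPay_le (hg x.1) (hσ _) (hτ _))

def guarantee (u : K × C × D → ℝ) (g : K → I → J → ℝ) (σ : C → I → ℝ) : ℝ :=
  sInf {y : ℝ | ∃ τ : D → J → ℝ, IsKernel τ ∧ y = pay u g σ τ}

lemma guarantee_le_pay (hu : IsDist u) (hg : Bounded1 g) {σ : C → I → ℝ} (hσ : IsKernel σ)
    {τ : D → J → ℝ} (hτ : IsKernel τ) : guarantee u g σ ≤ pay u g σ τ := by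
  refine csInf_le ⟨-1, ?_⟩ ⟨τ, hτ, rfl⟩
  rintro _ ⟨τ, hτ, rfl⟩
  exact (abs_le.mp (abs_pay_le hu hg hσ hτ)).1

lemma le_guarantee [Nonempty J] {σ : C → I → ℝ} {a : ℝ}
    (h : ∀ τ : D → J → ℝ, IsKernel τ → a ≤ pay u g σ τ) : a ≤ guarantee u g σ := by
  refine le_csInf ⟨_, _, fun _ => isDist_uniform, rfl⟩ ?_
  rintro _ ⟨τ, hτ, rfl⟩
  exact h τ hτ

lemma guarantee_le_gameVal [Nonempty J] (hu : IsDist u) (hg : Bounded1 g) {σ : C → I → ℝ}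
    (hσ : IsKernel σ) : guarantee u g σ ≤ gameVal u g := by
  refine le_csSup ⟨1, ?_⟩ ⟨σ, hσ, rfl⟩
  rintro _ ⟨σ, hσ, rfl⟩
  have hτ : IsKernel fun (_ : D) (_ : J) => (1 : ℝ) / Fintype.card J := fun _ => isDist_uniform
  exact (guarantee_le_pay hu hg hσ hτ).trans (abs_le.mp (abs_pay_le hu hg hσ hτ)).2

lemma gameVal_le [Nonempty I] {a : ℝ} (h : ∀ σ : C → I → ℝ, IsKernel σ → guarantee u g σ ≤ a) :
    gameVal u g ≤ a := by
  refine csSup_le ⟨_, _, fun _ => isDist_uniform, rfl⟩ ?_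
  rintro _ ⟨σ, hσ, rfl⟩
  exact h σ hσ

lemma gameVal_le_gameVal_add {C' D' : Type*} [Fintype C'] [Fintype D'] [Nonempty I] [Nonempty J]
    {v : K × C' × D' → ℝ} (hu : IsDist u) (hv : IsDist v) (hg : Bounded1 g) {δ : ℝ}
    (h : ∀ σ' : C' → I → ℝ, IsKernel σ' → ∃ σ : C → I → ℝ, IsKernel σ ∧
      ∀ τ : D → J → ℝ, IsKernel τ → ∃ τ' : D' → J → ℝ, IsKernel τ' ∧
        pay v g σ' τ' ≤ pay u g σ τ + δ) :
    gameVal v g ≤ gameVal u g + δ := by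
  refine gameVal_le fun σ' hσ' => ?_
  obtain ⟨σ, hσ, hresp⟩ := h σ' hσ'
  have : guarantee v g σ' - δ ≤ guarantee u g σ := le_guarantee fun τ hτ => by
    obtain ⟨τ', hτ', hle⟩ := hresp τ hτ
    linarith [guarantee_le_pay hv hg hσ' hτ']
  linarith [guarantee_le_gameVal hu hg hσ]

def condAverage (u : K × C × D → ℝ) (s : C × D → I → ℝ) : K → I → ℝ :=
  fun k => average (fun y => u (k, y)) s

lemma isKernel_condAverage [Nonempty I] (hu : IsDist u) {s : C × D → I → ℝ}
    (hs : IsKernel s) : IsKernel (condAverage u s) :=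
  fun _ => isDist_average (fun _ => hu.1 _) hs

end Game

lemma sum_ite_ne_le_of_knowledge {K X : Type*} [Fintype K] [Fintype X] [DecidableEq K]
    {w : K → X → ℝ} (hw : ∀ k x, 0 ≤ w k x) (hsum : ∑ k, ∑ x, w k x = 1) (κ : X → K) {ε : ℝ}
    (h : 1 - ε ≤ ∑ x, if (1 - ε) * ∑ k, w k x ≤ w (κ x) x then ∑ k, w k x else 0) :
    ∑ k, ∑ x, (if κ x = k then 0 else w k x) ≤ 2 * ε := by
  set m : X → ℝ := fun x => ∑ k, w k x
  set good : X → ℝ := fun x => if (1 - ε) * m x ≤ w (κ x) x then m x else 0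
  have hm : ∑ x, m x = 1 := sum_comm.trans hsum
  have hgood : ∑ x, good x ≤ 1 :=
    hm ▸ sum_le_sum fun x _ => by
      unfold good; split_ifs <;> simp [m, sum_nonneg fun k _ => hw k x]
  calc ∑ k, ∑ x, (if κ x = k then 0 else w k x)
      = ∑ x, (m x - w (κ x) x) := by
        rw [sum_comm]
        refine sum_congr rfl fun x _ => ?_
        have hdiag : w (κ x) x = ∑ k, if κ x = k then w k x else 0 := by simp
        rw [eq_sub_iff_add_eq, hdiag, ← sum_add_distrib]
        exact sum_congr rfl fun k _ => by split_ifs <;> simp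
    _ ≤ ∑ x, (ε * good x + (m x - good x)) := sum_le_sum fun x _ => by
        unfold good; split_ifs <;> nlinarith [hw (κ x) x]
    _ = ε * ∑ x, good x + (1 - ∑ x, good x) := by
        rw [sum_add_distrib, sum_sub_distrib, ← mul_sum, hm]
    _ ≤ 2 * ε := by nlinarith

section Knowledge

variable {K C D : Type*} [Fintype K] [Fintype C] [Fintype D] [DecidableEq K]
  {u : K × C × D → ℝ} {ε : ℝ}

lemma sum_ite_ne_le_of_knowledge_left (hu : IsDist u) (κ : C → K)
    (h : 1 - ε ≤ ∑ c, if (1 - ε) * (∑ k, ∑ d, u (k, c, d)) ≤ ∑ d, u (κ c, c, d)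
      then (∑ k, ∑ d, u (k, c, d)) else 0) :
    ∑ x : K × C × D, (if κ x.2.1 = x.1 then 0 else u x) ≤ 2 * ε :=
  calc _ = ∑ k, ∑ c, (if κ c = k then 0 else ∑ d, u (k, c, d)) := by
        simp only [Fintype.sum_prod_type]
        exact sum_congr rfl fun k _ => sum_congr rfl fun c _ => by
          by_cases hc : κ c = k <;> simp [hc]
    _ ≤ 2 * ε :=
        sum_ite_ne_le_of_knowledge (fun _ _ => sum_nonneg fun _ _ => hu.1 _) hu.sum_sum_sum κ h

lemma sum_ite_ne_le_of_knowledge_right (hu : IsDist u) (κ : D → K)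
    (h : 1 - ε ≤ ∑ d, if (1 - ε) * (∑ k, ∑ c, u (k, c, d)) ≤ ∑ c, u (κ d, c, d)
      then (∑ k, ∑ c, u (k, c, d)) else 0) :
    ∑ x : K × C × D, (if κ x.2.2 = x.1 then 0 else u x) ≤ 2 * ε :=
  calc _ = ∑ k, ∑ d, (if κ d = k then 0 else ∑ c, u (k, c, d)) := by
        simp only [Fintype.sum_prod_type]
        exact sum_congr rfl fun k _ => sum_comm.trans <| sum_congr rfl fun d _ => by
          by_cases hd : κ d = k <;> simp [hd]
    _ ≤ 2 * ε := by
        refine sum_ite_ne_le_of_knowledge (fun _ _ => sum_nonneg fun _ _ => hu.1 _) ?_ κ h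
        rw [← hu.sum_sum_sum]
        exact sum_congr rfl fun k _ => sum_comm

end Knowledge

lemma abs_sum_mul_sub_sum_mul_le {α : Type*} [Fintype α] {μ f f' : α → ℝ} (p : α → Prop)
    [DecidablePred p] (hμ : ∀ x, 0 ≤ μ x) (hf : ∀ x, |f x| ≤ 1) (hf' : ∀ x, |f' x| ≤ 1)
    (heq : ∀ x, p x → f x = f' x) :
    |∑ x, μ x * f x - ∑ x, μ x * f' x| ≤ 2 * ∑ x, if p x then 0 else μ x := by
  rw [← sum_sub_distrib, mul_sum]
  refine (abs_sum_le_sum_abs _ _).trans (sum_le_sum fun x _ => ?_)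
  split_ifs with hx
  · simp [heq x hx]
  · rw [← mul_sub, abs_mul, abs_of_nonneg (hμ x)]
    nlinarith [hμ x, abs_sub (f x) (f' x), hf x, hf' x]

section CommonKnowledge

variable {K C D I J : Type*} [Fintype K] [Fintype C] [Fintype D] [Fintype I] [Fintype J]
  [DecidableEq K] {u : K × C × D → ℝ} {v : K × K × K → ℝ} {g : K → I → J → ℝ}

def IsCommonKnowledgeOf (v : K × K × K → ℝ) (u : K × C × D → ℝ) : Prop :=
  ∀ k k₁ k₂, v (k, k₁, k₂) = if k₁ = k ∧ k₂ = k then ∑ c, ∑ d, u (k, c, d) else 0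

lemma IsCommonKnowledgeOf.isDist (hv : IsCommonKnowledgeOf v u) (hu : IsDist u) : IsDist v := by
  unfold IsCommonKnowledgeOf at hv
  refine ⟨fun ⟨k, k₁, k₂⟩ => ?_, ?_⟩
  · rw [hv]
    split_ifs
    · exact sum_nonneg fun c _ => sum_nonneg fun d _ => hu.1 _
    · exact le_rfl
  · simp only [Fintype.sum_prod_type, hv, ite_and, sum_ite_irrel, sum_const_zero, sum_ite_eq',
      mem_univ, if_true]
    exact hu.sum_sum_sum

lemma IsCommonKnowledgeOf.pay_eq (hv : IsCommonKnowledgeOf v u) (σ : K → I → ℝ)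
    (τ : K → J → ℝ) : pay v g σ τ = ∑ x, u x * mixedPay (g x.1) (σ x.1) (τ x.1) := by
  unfold IsCommonKnowledgeOf at hv
  simp only [pay_eq_sum_mixedPay, Fintype.sum_prod_type, hv, ite_and, ite_mul, zero_mul,
    sum_mul, sum_ite_irrel, sum_const_zero, sum_ite_eq', mem_univ, if_true]

-- In `v` a strategy depends on the state only, so against it the opponent's strategy may be
-- replaced by its average conditional on the state; only the mass where `κ` misreads the state
-- then separates the two payoffs.
lemma abs_pay_sub_pay_commonKnowledge_le_left [Nonempty J] (hu : IsDist u)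
    (hv : IsCommonKnowledgeOf v u) (hg : Bounded1 g) (κ : C → K) {σ : K → I → ℝ}
    (hσ : IsKernel σ) {τ : D → J → ℝ} (hτ : IsKernel τ) :
    |pay u g (fun c => σ (κ c)) τ
        - pay v g σ (condAverage u (fun y => τ y.2))|
      ≤ 2 * ∑ x : K × C × D, if κ x.2.1 = x.1 then 0 else u x := by
  have hposterior : pay v g σ (condAverage u (fun y => τ y.2))
      = ∑ x, u x * mixedPay (g x.1) (σ x.1) (τ x.2.2) := by
    rw [hv.pay_eq, Fintype.sum_prod_type, Fintype.sum_prod_type]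
    refine sum_congr rfl fun k _ => ?_
    dsimp only
    rw [← sum_mul]
    exact sum_mul_mixedPay_average_right (w := fun y => u (k, y)) (fun _ => hu.1 _) (σ k)
      (fun y => τ y.2)
  rw [pay_eq_sum_mixedPay, hposterior]
  exact abs_sum_mul_sub_sum_mul_le _ hu.1
    (fun x => abs_mixedPay_le (hg x.1) (hσ _) (hτ _))
    (fun x => abs_mixedPay_le (hg x.1) (hσ _) (hτ _)) fun x hx => by rw [hx]

lemma abs_pay_sub_pay_commonKnowledge_le_right [Nonempty I] (hu : IsDist u)
    (hv : IsCommonKnowledgeOf v u) (hg : Bounded1 g) (κ : D → K) {σ : C → I → ℝ}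
    (hσ : IsKernel σ) {τ : K → J → ℝ} (hτ : IsKernel τ) :
    |pay u g σ (fun d => τ (κ d))
        - pay v g (condAverage u (fun y => σ y.1)) τ|
      ≤ 2 * ∑ x : K × C × D, if κ x.2.2 = x.1 then 0 else u x := by
  have hposterior : pay v g (condAverage u (fun y => σ y.1)) τ
      = ∑ x, u x * mixedPay (g x.1) (σ x.2.1) (τ x.1) := by
    rw [hv.pay_eq, Fintype.sum_prod_type, Fintype.sum_prod_type]
    refine sum_congr rfl fun k _ => ?_
    dsimp only
    rw [← sum_mul]
    exact sum_mul_mixedPay_average_left (w := fun y => u (k, y)) (fun _ => hu.1 _)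
      (fun y => σ y.1) (τ k)
  rw [pay_eq_sum_mixedPay, hposterior]
  exact abs_sum_mul_sub_sum_mul_le _ hu.1
    (fun x => abs_mixedPay_le (hg x.1) (hσ _) (hτ _))
    (fun x => abs_mixedPay_le (hg x.1) (hσ _) (hτ _)) fun x hx => by rw [hx]

end CommonKnowledge

end

theorem stmt9_general {K C D : Type*} [Fintype K] [Fintype C] [Fintype D] [DecidableEq K]
    (u : K × C × D → ℝ) (hu : IsDist u) (ε : ℝ)
    (κC : C → K) (κD : D → K)
    -- ε-knowledge of the state for player 1:
    (h1 : 1 - ε ≤ ∑ c, if (1 - ε) * (∑ k, ∑ d, u (k, c, d)) ≤ ∑ d, u (κC c, c, d)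
        then (∑ k, ∑ d, u (k, c, d)) else 0)
    -- ε-knowledge of the state for player 2:
    (h2 : 1 - ε ≤ ∑ d, if (1 - ε) * (∑ k, ∑ c, u (k, c, d)) ≤ ∑ c, u (κD d, c, d)
        then (∑ k, ∑ c, u (k, c, d)) else 0)
    (v : K × K × K → ℝ)
    (hv : ∀ k k₁ k₂, v (k, k₁, k₂)
      = if k₁ = k ∧ k₂ = k then (∑ c, ∑ d, u (k, c, d)) else 0) :
    valueDist u v ≤ 20 * ε := by
  have hck : IsCommonKnowledgeOf v u := hv
  have hvd : IsDist v := hck.isDist hu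
  have hbad₁ := sum_ite_ne_le_of_knowledge_left hu κC h1
  have hbad₂ := sum_ite_ne_le_of_knowledge_right hu κD h2
  have hε : 0 ≤ ε := by
    have : 0 ≤ ∑ x : K × C × D, if κC x.2.1 = x.1 then 0 else u x :=
      sum_nonneg fun x _ => by split_ifs <;> simp [hu.1 x]
    linarith
  refine Real.sSup_le ?_ (by linarith)
  rintro _ ⟨m, n, g, hg, rfl⟩
  have hvu : gameVal v g ≤ gameVal u g + 4 * ε :=
    gameVal_le_gameVal_add hu hvd hg fun σ hσ => ⟨_, fun c => hσ (κC c), fun τ hτ =>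
      ⟨_, isKernel_condAverage hu fun y => hτ y.2, by
        linarith [(abs_le.mp (abs_pay_sub_pay_commonKnowledge_le_left hu hck hg κC hσ hτ)).1]⟩⟩
  have huv : gameVal u g ≤ gameVal v g + 4 * ε :=
    gameVal_le_gameVal_add hvd hu hg fun σ hσ =>
      ⟨_, isKernel_condAverage hu fun y => hσ y.1, fun τ hτ =>
        ⟨_, fun d => hτ (κD d), by
          linarith [(abs_le.mp (abs_pay_sub_pay_commonKnowledge_le_right hu hck hg κD hσ hτ)).2]⟩⟩
  rw [abs_sub_le_iff]
  constructor <;> linarith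

theorem stmt9 {K C D : Type*} [Fintype K] [Fintype C] [Fintype D] [DecidableEq K]
    (u : K × C × D → ℝ) (hu : IsDist u) (ε : ℝ) (hε : 0 ≤ ε)
    (κC : C → K) (κD : D → K)
    -- ε-knowledge of the state for player 1:
    (h1 : 1 - ε ≤ ∑ c, if (1 - ε) * (∑ k, ∑ d, u (k, c, d)) ≤ ∑ d, u (κC c, c, d)
        then (∑ k, ∑ d, u (k, c, d)) else 0)
    -- ε-knowledge of the state for player 2:
    (h2 : 1 - ε ≤ ∑ d, if (1 - ε) * (∑ k, ∑ c, u (k, c, d)) ≤ ∑ c, u (κD d, c, d)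
        then (∑ k, ∑ c, u (k, c, d)) else 0)
    (v : K × K × K → ℝ)
    (hv : ∀ k k₁ k₂, v (k, k₁, k₂)
      = if k₁ = k ∧ k₂ = k then (∑ c, ∑ d, u (k, c, d)) else 0) :
    valueDist u v ≤ 20 * ε :=
  stmt9_general u hu ε κC κD h1 h2 v hv
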